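/- arXiv:cond-mat/0404132 — 5 statements merged into one kernel-verified Lean document; each statement's English description precedes it below -/
import Mathlib

section
/- Let μ be a probability measure and q a random variable with |q| ≤ 1 almost surely. Then for every integer s ≥ 3 there is a constant ξ_s, depending only on s, such that |μ(q^s) − (μ(q))^s| ≤ ξ_s · (μ(q²) − (μ(q))²). -/
open MeasureTheory

lemma moment_key (n : ℕ) (x y : ℝ) (hx : |x| ≤ 1) (hy : |y| ≤ 1) :
    |x ^ (n + 1) - y ^ (n + 1) - ((n : ℝ) + 1) * y ^ n * (x - y)|
      ≤ ((n : ℝ) + 1) ^ 2 * (x - y) ^ 2 := by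
  induction n with
  | zero => simp; positivity
  | succ n ih =>
    have hyn : |y ^ n| ≤ 1 := by
      rw [abs_pow]; exact pow_le_one₀ (abs_nonneg y) hy
    have h1 : x ^ (n + 2) - y ^ (n + 2) - ((n : ℝ) + 2) * y ^ (n + 1) * (x - y)
        = x * (x ^ (n + 1) - y ^ (n + 1) - ((n : ℝ) + 1) * y ^ n * (x - y))
          + ((n : ℝ) + 1) * y ^ n * (x - y) ^ 2 := by ring
    have h2 : ((n : ℝ) + 1 + 1) = (n : ℝ) + 2 := by ring
    push_cast
    rw [h2, h1]
    calc |x * (x ^ (n + 1) - y ^ (n + 1) - ((n : ℝ) + 1) * y ^ n * (x - y))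
          + ((n : ℝ) + 1) * y ^ n * (x - y) ^ 2|
        ≤ |x| * |x ^ (n + 1) - y ^ (n + 1) - ((n : ℝ) + 1) * y ^ n * (x - y)|
          + ((n : ℝ) + 1) * |y ^ n| * (x - y) ^ 2 := by
          refine (abs_add_le _ _).trans ?_
          rw [abs_mul]
          gcongr
          rw [abs_mul, abs_mul, abs_of_nonneg (by positivity : (0:ℝ) ≤ (n:ℝ)+1),
            abs_of_nonneg (by positivity : (0:ℝ) ≤ (x-y)^2)]
      _ ≤ ((n : ℝ) + 2) ^ 2 * (x - y) ^ 2 := by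
          nlinarith [ih, abs_nonneg x, abs_nonneg (y ^ n), sq_nonneg (x - y),
            abs_nonneg (x ^ (n + 1) - y ^ (n + 1) - ((n : ℝ) + 1) * y ^ n * (x - y)),
            mul_le_mul hx (ih) (abs_nonneg _) zero_le_one]

/-- For every integer `s ≥ 3` there is a constant `ξ_s`, depending only on `s`, such that for
every probability measure `μ` and random variable `q` with `|q| ≤ 1` a.s.,
`|μ(q^s) − (μ(q))^s| ≤ ξ_s (μ(q²) − (μ(q))²)`. -/
theorem moment_diff_le_variance (s : ℕ) (hs : 3 ≤ s) :
    ∃ ξ : ℝ, ∀ (Ω : Type) (m : MeasurableSpace Ω) (μ : Measure Ω),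
      IsProbabilityMeasure μ → ∀ q : Ω → ℝ, Measurable q → (∀ᵐ ω ∂μ, |q ω| ≤ 1) →
      |(∫ ω, q ω ^ s ∂μ) - (∫ ω, q ω ∂μ) ^ s|
        ≤ ξ * ((∫ ω, q ω ^ 2 ∂μ) - (∫ ω, q ω ∂μ) ^ 2) := by
  obtain ⟨n, rfl⟩ : ∃ n, s = n + 1 := ⟨s - 1, by omega⟩
  refine ⟨((n : ℝ) + 1) ^ 2, fun Ω mΩ μ hμ q hq hq1 => ?_⟩
  set m : ℝ := ∫ ω, q ω ∂μ with hm
  -- integrability of powers of q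
  have hint : ∀ k : ℕ, Integrable (fun ω => q ω ^ k) μ := by
    intro k
    refine ⟨(hq.pow_const k).aestronglyMeasurable, HasFiniteIntegral.of_bounded (C := 1) ?_⟩
    filter_upwards [hq1] with ω hω
    rw [Real.norm_eq_abs, abs_pow]
    exact pow_le_one₀ (abs_nonneg _) hω
  have hq_int : Integrable q μ := by
    have := hint 1; simpa using this
  -- |m| ≤ 1
  have hm1 : |m| ≤ 1 := by
    have h := norm_integral_le_of_norm_le_const (μ := μ) (f := q) (C := 1)
      (by filter_upwards [hq1] with ω hω; simpa using hω)
    rw [Real.norm_eq_abs] at h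
    simpa using h
  -- named integrable pieces
  have hA : Integrable (fun ω => q ω ^ (n + 1) - m ^ (n + 1)) μ :=
    (hint (n + 1)).sub (integrable_const _)
  have hB : Integrable (fun ω => ((n : ℝ) + 1) * m ^ n * (q ω - m)) μ :=
    ((hq_int.sub (integrable_const m)).const_mul _)
  have hf_int : Integrable
      (fun ω => q ω ^ (n + 1) - m ^ (n + 1) - ((n : ℝ) + 1) * m ^ n * (q ω - m)) μ :=
    hA.sub hB
  have hsq_int : Integrable (fun ω => (q ω - m) ^ 2) μ := by
    have h2 : (fun ω => (q ω - m) ^ 2)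
        = fun ω => q ω ^ 2 - 2 * m * q ω + m ^ 2 := by funext ω; ring
    rw [h2]
    exact ((hint 2).sub (hq_int.const_mul _)).add (integrable_const _)
  have hg_int : Integrable (fun ω => ((n : ℝ) + 1) ^ 2 * (q ω - m) ^ 2) μ :=
    hsq_int.const_mul _
  -- ∫ f = ∫ q^(n+1) - m^(n+1)
  have hB0 : ∫ ω, ((n : ℝ) + 1) * m ^ n * (q ω - m) ∂μ = 0 := by
    rw [integral_const_mul, integral_sub hq_int (integrable_const _)]
    simp [hm]
  have hA0 : ∫ ω, (q ω ^ (n + 1) - m ^ (n + 1)) ∂μ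
      = (∫ ω, q ω ^ (n + 1) ∂μ) - m ^ (n + 1) := by
    rw [integral_sub (hint (n + 1)) (integrable_const _)]
    simp
  have hfi : ∫ ω, (q ω ^ (n + 1) - m ^ (n + 1) - ((n : ℝ) + 1) * m ^ n * (q ω - m)) ∂μ
      = (∫ ω, q ω ^ (n + 1) ∂μ) - m ^ (n + 1) := by
    rw [integral_sub hA hB, hA0, hB0, sub_zero]
  -- ∫ (q-m)^2 = ∫ q^2 - m^2
  have hvar : ∫ ω, (q ω - m) ^ 2 ∂μ = (∫ ω, q ω ^ 2 ∂μ) - m ^ 2 := by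
    have h2 : ∀ ω, (q ω - m) ^ 2 = q ω ^ 2 - 2 * m * q ω + m ^ 2 := fun ω => by ring
    simp_rw [h2]
    have hC : Integrable (fun ω => q ω ^ 2 - 2 * m * q ω) μ := (hint 2).sub (hq_int.const_mul _)
    have hD : Integrable (fun ω => 2 * m * q ω) μ := hq_int.const_mul _
    rw [integral_add hC (integrable_const _),
      integral_sub (hint 2) hD, integral_const_mul, integral_const]
    simp [hm]
    ring
  calc |(∫ ω, q ω ^ (n + 1) ∂μ) - m ^ (n + 1)|
      = |∫ ω, (q ω ^ (n + 1) - m ^ (n + 1) - ((n : ℝ) + 1) * m ^ n * (q ω - m)) ∂μ| := by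
        rw [hfi]
    _ ≤ ∫ ω, |q ω ^ (n + 1) - m ^ (n + 1) - ((n : ℝ) + 1) * m ^ n * (q ω - m)| ∂μ := by
        have := norm_integral_le_integral_norm (μ := μ)
          (f := fun ω => q ω ^ (n + 1) - m ^ (n + 1) - ((n : ℝ) + 1) * m ^ n * (q ω - m))
        simpa [Real.norm_eq_abs] using this
    _ ≤ ∫ ω, ((n : ℝ) + 1) ^ 2 * (q ω - m) ^ 2 ∂μ := by
        refine integral_mono_ae hf_int.abs hg_int ?_
        filter_upwards [hq1] with ω hω
        exact moment_key n (q ω) m hω hm1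
    _ = ((n : ℝ) + 1) ^ 2 * ((∫ ω, q ω ^ 2 ∂μ) - m ^ 2) := by
        rw [integral_const_mul, hvar]
end

section
/- Decomposition identity for Kac potentials (Lemma 3 of the paper): let G be a finite abelian group of cardinality N, ψ : G → ℝ≥0 with ∑_k ψ(k) > 0, and w⁽ʳ⁾ the associated Kac potentials. Given real numbers (τ_i)_{i∈G} and M = N⁻¹ ∑_i τ_i, for every p ≥ 1: N⁻¹ ∑_{i₁,…,i_p} w⁽ᵖ⁾(i₁,…,i_p) τ_{i₁}⋯τ_{i_p} − M^p = N⁻¹ ∑_{r=2}^{p} M^{p−r} C(p,r) ∑_{i₁,…,i_r} w⁽ʳ⁾(i₁,…,i_r) ∏_{s=1}^{r} (τ_{i_s} − M). -/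
open Finset

/-- The Kac potential `w⁽ʳ⁾(i₁,…,i_r) = (∑_k ψ(i₁−k)⋯ψ(i_r−k)) / (∑_k ψ(k))^r` on a finite
abelian group. -/
noncomputable def kacW {G : Type} [AddCommGroup G] [Fintype G] (ψ : G → ℝ) (r : ℕ)
    (i : Fin r → G) : ℝ :=
  (∑ k, ∏ a, ψ (i a - k)) / (∑ k, ψ k) ^ r

lemma kac_sum_key {G : Type} [AddCommGroup G] [Fintype G] (ψ u : G → ℝ) (r : ℕ) :
    ∑ i : Fin r → G, (∑ k, ∏ a, ψ (i a - k)) * ∏ s, u (i s)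
      = ∑ k, (∑ x, ψ (x - k) * u x) ^ r := by
  simp_rw [Finset.sum_mul]
  rw [Finset.sum_comm]
  refine Finset.sum_congr rfl fun k _ => ?_
  have h : ∀ i : Fin r → G, (∏ a, ψ (i a - k)) * ∏ s, u (i s)
      = ∏ a, (ψ (i a - k) * u (i a)) := fun i => (Finset.prod_mul_distrib).symm
  simp_rw [h]
  rw [← Fintype.piFinset_univ,
    ← Finset.prod_univ_sum (t := fun _ : Fin r => (univ : Finset G))
      (f := fun _ y => ψ (y - k) * u y)]
  simp

/-- Decomposition identity for Kac potentials (Lemma 3 of the paper): with `N = |G|`,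
`M = N⁻¹ ∑_i τ_i`, for every `p ≥ 1`:
`N⁻¹ ∑ w⁽ᵖ⁾ τ_{i₁}⋯τ_{i_p} − M^p
  = N⁻¹ ∑_{r=2}^p M^{p−r} C(p,r) ∑ w⁽ʳ⁾ ∏_{s=1}^r (τ_{i_s} − M)`. -/
theorem kacW_decomposition {G : Type} [AddCommGroup G] [Fintype G] (ψ : G → ℝ)
    (hψ : ∀ k, 0 ≤ ψ k) (hW : 0 < ∑ k, ψ k) (τ : G → ℝ) (M : ℝ)
    (hM : M = (Fintype.card G : ℝ)⁻¹ * ∑ i, τ i) (p : ℕ) (hp : 1 ≤ p) :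
    (Fintype.card G : ℝ)⁻¹ * (∑ i : Fin p → G, kacW ψ p i * ∏ s, τ (i s)) - M ^ p
      = (Fintype.card G : ℝ)⁻¹ * ∑ r ∈ Finset.Icc 2 p, M ^ (p - r) * (p.choose r : ℝ) *
          ∑ i : Fin r → G, kacW ψ r i * ∏ s, (τ (i s) - M) := by
  classical
  set N : ℝ := (Fintype.card G : ℝ) with hN
  have hNpos : (0:ℝ) < N := by
    rw [hN]; exact_mod_cast Fintype.card_pos
  have hN0 : N ≠ 0 := ne_of_gt hNpos
  set W : ℝ := ∑ k, ψ k with hWdef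
  have hW0 : W ≠ 0 := ne_of_gt hW
  have hshiftL : ∀ x : G, ∑ k, ψ (x - k) = W := fun x => Equiv.sum_comp (Equiv.subLeft x) ψ
  have hshiftR : ∀ k : G, ∑ x, ψ (x - k) = W := fun k => Equiv.sum_comp (Equiv.subRight k) ψ
  set A : G → ℝ := fun k => ∑ x, ψ (x - k) * (τ x - M) with hA
  -- rewrite the RHS inner sums
  have hR : ∀ r : ℕ, (∑ i : Fin r → G, kacW ψ r i * ∏ s, (τ (i s) - M))
      = (∑ k, A k ^ r) / W ^ r := by
    intro r
    simp_rw [kacW, div_mul_eq_mul_div, ← Finset.sum_div]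
    congr 1
    exact kac_sum_key ψ (fun x => τ x - M) r
  -- rewrite the LHS sum
  have hL : (∑ i : Fin p → G, kacW ψ p i * ∏ s, τ (i s))
      = (∑ k, (A k + M * W) ^ p) / W ^ p := by
    simp_rw [kacW, div_mul_eq_mul_div, ← Finset.sum_div]
    rw [kac_sum_key]
    congr 1
    refine Finset.sum_congr rfl fun k _ => ?_
    congr 1
    have h2 : ∀ x : G, ψ (x - k) * τ x = ψ (x - k) * (τ x - M) + ψ (x - k) * M := by
      intro x; ring
    simp_rw [h2, Finset.sum_add_distrib, ← Finset.sum_mul, hshiftR k]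
    ring
  have hsumτ : ∑ x, τ x = N * M := by
    rw [hM]; field_simp
  have hA1 : ∑ k, A k = 0 := by
    simp only [hA]
    rw [Finset.sum_comm]
    have h3 : ∀ x : G, ∑ k, ψ (x - k) * (τ x - M) = W * (τ x - M) := by
      intro x; rw [← Finset.sum_mul, hshiftL x, mul_comm]
    simp_rw [h3, ← Finset.mul_sum, Finset.sum_sub_distrib, hsumτ, Finset.sum_const,
      Finset.card_univ, nsmul_eq_mul]
    rw [← hN]
    ring
  -- binomial expansion
  have hpow : ∀ k : G, (A k + M * W) ^ p
      = ∑ r ∈ Finset.range (p + 1), A k ^ r * (M * W) ^ (p - r) * (p.choose r : ℝ) := by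
    intro k; exact add_pow (A k) (M * W) p
  simp_rw [hR]
  rw [hL]
  have hexp : (∑ k, (A k + M * W) ^ p) / W ^ p
      = ∑ r ∈ Finset.range (p + 1),
          M ^ (p - r) * (p.choose r : ℝ) * ((∑ k, A k ^ r) / W ^ r) := by
    simp_rw [hpow]
    rw [Finset.sum_comm, Finset.sum_div]
    refine Finset.sum_congr rfl fun r hr => ?_
    rw [Finset.mem_range] at hr
    have hrp : r ≤ p := Nat.lt_succ_iff.mp hr
    have hWp : W ^ p = W ^ r * W ^ (p - r) := by rw [← pow_add]; congr 1; omega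
    rw [← Finset.sum_mul, ← Finset.sum_mul, mul_pow, hWp]
    field_simp
  rw [hexp]
  have hsplit : Finset.range (p + 1) = insert 0 (insert 1 (Finset.Icc 2 p)) := by
    ext x; simp only [Finset.mem_range, Finset.mem_insert, Finset.mem_Icc]; omega
  rw [hsplit, Finset.sum_insert (by simp), Finset.sum_insert (by simp)]
  have h0 : M ^ (p - 0) * (p.choose 0 : ℝ) * ((∑ k : G, A k ^ 0) / W ^ 0) = M ^ p * N := by
    simp [hN, Finset.card_univ]
  have h1 : M ^ (p - 1) * (p.choose 1 : ℝ) * ((∑ k : G, A k ^ 1) / W ^ 1) = 0 := by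
    simp [hA1]
  rw [h0, h1]
  field_simp
  ring
end

section
/- Generalized decomposition identity: with the setup of the previous lemma, for every p ≥ 1 and 0 ≤ k ≤ p: N⁻¹ ∑_{i₁,…,i_p} w⁽ᵖ⁾(i₁,…,i_p) τ_{i₁}⋯τ_{i_k} (τ_{i_{k+1}}−M)⋯(τ_{i_p}−M) = M^p·[k = p] + N⁻¹ ∑_{r=max(2, p−k)}^{p} M^{p−r} C(k, k+r−p) ∑_{i₁,…,i_r} w⁽ʳ⁾(i₁,…,i_r) ∏_{s=1}^{r} (τ_{i_s} − M), where [k=p] is 1 if k = p and 0 otherwise. -/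
open Finset

section Aux
variable {G : Type} [AddCommGroup G] [Fintype G] (ψ τ : G → ℝ) (M : ℝ)

/-- `W_r = ∑ w⁽ʳ⁾ ∏ (τ − M)`. -/
noncomputable def kacWsum (r : ℕ) : ℝ :=
  ∑ i : Fin r → G, kacW ψ r i * ∏ s, (τ (i s) - M)

lemma kacW_sum_cons (hW : (∑ k, ψ k) ≠ 0) (r : ℕ) (i : Fin r → G) :
    ∑ j : G, kacW ψ (r + 1) ((Fin.cons j i : Fin (r+1) → G)) = kacW ψ r i := by
  unfold kacW
  rw [← Finset.sum_div]
  have h1 : ∀ j : G, (∑ k, ∏ a : Fin (r+1), ψ ((Fin.cons j i : Fin (r+1) → G) a - k))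
      = ∑ k, ψ (j - k) * ∏ a : Fin r, ψ (i a - k) := by
    intro j
    refine Finset.sum_congr rfl fun k _ => ?_
    rw [Fin.prod_univ_succ]
    simp
  simp_rw [h1]
  rw [Finset.sum_comm]
  have h2 : ∀ k : G, (∑ j : G, ψ (j - k) * ∏ a : Fin r, ψ (i a - k))
      = (∑ j, ψ j) * ∏ a : Fin r, ψ (i a - k) := by
    intro k
    rw [← Finset.sum_mul]
    congr 1
    exact Equiv.sum_comp (Equiv.subRight k) ψ
  simp_rw [h2]
  rw [← Finset.mul_sum]
  rw [pow_succ, mul_comm ((∑ k, ψ k)^r)]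
  rw [mul_div_mul_left _ _ hW]

lemma kacW_comp_perm (r : ℕ) (e : Equiv.Perm (Fin r)) (i : Fin r → G) :
    kacW ψ r (i ∘ e) = kacW ψ r i := by
  unfold kacW
  congr 1
  exact Finset.sum_congr rfl fun k _ => Equiv.prod_comp e (fun a => ψ (i a - k))

set_option maxRecDepth 8000 in
lemma kacW_filter (hW : (∑ k, ψ k) ≠ 0) :
    ∀ (p : ℕ) (P : Fin p → Prop) (_ : DecidablePred P),
      (∑ i : Fin p → G, kacW ψ p i * ∏ s, (if P s then τ (i s) - M else 1))
        = kacWsum ψ τ M ((univ.filter P).card) := by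
  intro p
  induction p with
  | zero =>
    intro P _
    have h0 : (univ.filter P).card = 0 :=
      Nat.le_zero.mp (le_trans (Finset.card_filter_le _ _) (by simp))
    rw [h0]
    simp [kacWsum]
  | succ p IH =>
    intro P hdec
    classical
    have core : ∀ (Q : Fin (p+1) → Prop) (_ : DecidablePred Q), ¬ Q 0 →
        (∑ i : Fin (p+1) → G, kacW ψ (p+1) i * ∏ s, (if Q s then τ (i s) - M else 1))
          = kacWsum ψ τ M ((univ.filter Q).card) := by
      intro Q _ hQ0
      have hsum : (∑ i : Fin (p+1) → G, kacW ψ (p+1) i * ∏ s, (if Q s then τ (i s) - M else 1))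
          = ∑ x : G × (Fin p → G), kacW ψ (p+1) ((Fin.cons x.1 x.2 : Fin (p+1) → G)) *
              ∏ s : Fin (p+1), (if Q s then τ ((Fin.cons x.1 x.2 : Fin (p+1) → G) s) - M else 1) := by
        exact (Equiv.sum_comp (Fin.consEquiv (fun _ : Fin (p+1) => G))
          (fun i => kacW ψ (p+1) i * ∏ s, (if Q s then τ (i s) - M else 1))).symm
      rw [hsum, Fintype.sum_prod_type]
      have hprod : ∀ (j : G) (i : Fin p → G),
          (∏ s : Fin (p+1), (if Q s then τ ((Fin.cons j i : Fin (p+1) → G) s) - M else 1))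
            = ∏ s : Fin p, (if Q s.succ then τ (i s) - M else 1) := by
        intro j i
        rw [Fin.prod_univ_succ]
        simp [hQ0]
      simp_rw [hprod]
      have key : ∀ i : Fin p → G,
          (∑ j : G, kacW ψ (p+1) ((Fin.cons j i : Fin (p+1) → G)) *
            ∏ s : Fin p, (if Q s.succ then τ (i s) - M else 1))
          = kacW ψ p i * ∏ s : Fin p, (if Q s.succ then τ (i s) - M else 1) := by
        intro i
        rw [← Finset.sum_mul, kacW_sum_cons ψ hW]
      rw [Finset.sum_comm]
      simp_rw [key]
      rw [IH (fun s => Q s.succ) inferInstance]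
      congr 1
      have h1 : (univ.filter Q).card = ∑ s : Fin (p+1), (if Q s then 1 else 0) :=
        Finset.card_filter _ _
      have h2 : (univ.filter (fun s : Fin p => Q s.succ)).card
          = ∑ s : Fin p, (if Q s.succ then 1 else 0) := Finset.card_filter _ _
      rw [h1, h2, Fin.sum_univ_succ, if_neg hQ0, zero_add]
    by_cases hall : ∀ s, P s
    · have hcard : (univ.filter P).card = p + 1 := by
        simp [Finset.filter_true_of_mem (fun s _ => hall s)]
      rw [hcard]
      unfold kacWsum
      refine Finset.sum_congr rfl fun i _ => ?_
      congr 1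
      exact Finset.prod_congr rfl fun s _ => if_pos (hall s)
    · push_neg at hall
      obtain ⟨s₀, hs₀⟩ := hall
      set e : Equiv.Perm (Fin (p+1)) := Equiv.swap 0 s₀ with he
      have key : (∑ i : Fin (p+1) → G, kacW ψ (p+1) i * ∏ s, (if P s then τ (i s) - M else 1))
          = ∑ i : Fin (p+1) → G, kacW ψ (p+1) i * ∏ s, (if P (e s) then τ (i s) - M else 1) := by
        rw [← Equiv.sum_comp (Equiv.arrowCongr e.symm (Equiv.refl G))
          (fun i => kacW ψ (p+1) i * ∏ s, (if P (e s) then τ (i s) - M else 1))]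
        refine Finset.sum_congr rfl fun i _ => ?_
        have h1 : (Equiv.arrowCongr e.symm (Equiv.refl G)) i = i ∘ e := by
          ext s; simp [Equiv.arrowCongr]
        rw [h1, kacW_comp_perm]
        congr 1
        exact (Equiv.prod_comp e (fun s => if P s then τ (i s) - M else 1)).symm
      rw [key, core (fun s => P (e s)) inferInstance (by simpa [he] using hs₀)]
      congr 1
      apply Finset.card_bij (fun s _ => e s)
      · intro a ha; simp at ha ⊢; exact ha
      · intro a _ b _ hab; exact e.injective hab
      · intro b hb; exact ⟨e.symm b, by simp at hb ⊢; simpa using hb, by simp⟩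

lemma kacW_subset (hW : (∑ k, ψ k) ≠ 0) (p : ℕ) (B : Finset (Fin p)) :
    (∑ i : Fin p → G, kacW ψ p i * ∏ s ∈ B, (τ (i s) - M)) = kacWsum ψ τ M B.card := by
  classical
  have h := kacW_filter ψ τ M hW p (fun s => s ∈ B) inferInstance
  have hfil : univ.filter (fun s => s ∈ B) = B := by ext s; simp
  rw [hfil] at h
  rw [← h]
  refine Finset.sum_congr rfl fun i _ => ?_
  congr 1
  exact (Fintype.prod_ite_mem B (fun s => τ (i s) - M)).symm

lemma kacWsum_zero : kacWsum ψ τ M 0 = (Fintype.card G : ℝ) := by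
  unfold kacWsum kacW
  simp

lemma kacWsum_one (hW : (∑ k, ψ k) ≠ 0)
    (hM : M = (Fintype.card G : ℝ)⁻¹ * ∑ i, τ i) : kacWsum ψ τ M 1 = 0 := by
  have hN0 : (Fintype.card G : ℝ) ≠ 0 := Nat.cast_ne_zero.mpr Fintype.card_ne_zero
  have hk1 : ∀ i : Fin 1 → G, kacW ψ 1 i = 1 := by
    intro i
    unfold kacW
    rw [pow_one]
    have h : (∑ k, ∏ a : Fin 1, ψ (i a - k)) = ∑ k, ψ k := by
      rw [show (∑ k, ∏ a : Fin 1, ψ (i a - k)) = ∑ k, ψ (i 0 - k) from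
        Finset.sum_congr rfl fun k _ => Fin.prod_univ_one _]
      exact Equiv.sum_comp (Equiv.subLeft (i 0)) ψ
    rw [h, div_self hW]
  unfold kacWsum
  simp_rw [hk1, one_mul, Fin.prod_univ_one]
  have he : (∑ x : Fin 1 → G, (τ (x 0) - M)) = ∑ j : G, (τ j - M) :=
    Fintype.sum_equiv (Equiv.funUnique (Fin 1) G) _ _ (fun i => rfl)
  rw [he]
  rw [Finset.sum_sub_distrib, Finset.sum_const, Finset.card_univ, nsmul_eq_mul]
  rw [hM]
  field_simp
  ring

end Aux

/-- Generalized decomposition identity for Kac potentials: with `N = |G|`,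
`M = N⁻¹ ∑_i τ_i`, for every `p ≥ 1` and `0 ≤ k ≤ p`:
`N⁻¹ ∑ w⁽ᵖ⁾ τ_{i₁}⋯τ_{i_k}(τ_{i_{k+1}}−M)⋯(τ_{i_p}−M)
  = M^p [k = p] + N⁻¹ ∑_{r=max(2,p−k)}^p M^{p−r} C(k, k+r−p) ∑ w⁽ʳ⁾ ∏_{s=1}^r (τ_{i_s} − M)`. -/
theorem kacW_decomposition_general {G : Type} [AddCommGroup G] [Fintype G] (ψ : G → ℝ)
    (hψ : ∀ k, 0 ≤ ψ k) (hW : 0 < ∑ k, ψ k) (τ : G → ℝ) (M : ℝ)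
    (hM : M = (Fintype.card G : ℝ)⁻¹ * ∑ i, τ i) (p k : ℕ) (hp : 1 ≤ p) (hk : k ≤ p) :
    (Fintype.card G : ℝ)⁻¹ * (∑ i : Fin p → G, kacW ψ p i *
        ∏ s : Fin p, (if (s : ℕ) < k then τ (i s) else τ (i s) - M))
      = M ^ p * (if k = p then 1 else 0) +
        (Fintype.card G : ℝ)⁻¹ * ∑ r ∈ Finset.Icc (max 2 (p - k)) p,
          M ^ (p - r) * (k.choose (k + r - p) : ℝ) *
          ∑ i : Fin r → G, kacW ψ r i * ∏ s, (τ (i s) - M) := by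
  classical
  have hN0 : (Fintype.card G : ℝ) ≠ 0 := Nat.cast_ne_zero.mpr Fintype.card_ne_zero
  have hW0 : (∑ k, ψ k) ≠ 0 := ne_of_gt hW
  set c : Fin p → ℝ := fun s => if (s : ℕ) < k then M else 0 with hc
  -- Step 1: binomial expansion of the product
  have step1 : ∀ i : Fin p → G,
      (∏ s : Fin p, (if (s : ℕ) < k then τ (i s) else τ (i s) - M))
        = ∑ A ∈ (univ : Finset (Fin p)).powerset,
            (∏ s ∈ A, c s) * ∏ s ∈ univ \ A, (τ (i s) - M) := by
    intro i
    rw [← Finset.prod_add]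
    refine Finset.prod_congr rfl fun s _ => ?_
    simp only [hc]
    split_ifs <;> ring
  -- Step 3: swap the sums and sum out indices
  have step3 : (∑ i : Fin p → G, kacW ψ p i *
        ∏ s : Fin p, (if (s : ℕ) < k then τ (i s) else τ (i s) - M))
      = ∑ A ∈ (univ : Finset (Fin p)).powerset,
          (∏ s ∈ A, c s) * kacWsum ψ τ M (p - A.card) := by
    simp_rw [step1, Finset.mul_sum]
    rw [Finset.sum_comm]
    refine Finset.sum_congr rfl fun A hA => ?_
    have hcard : (univ \ A).card = p - A.card := by
      rw [Finset.card_sdiff_of_subset (Finset.subset_univ A)]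
      simp
    have h1 : (∑ i : Fin p → G, kacW ψ p i * ((∏ s ∈ A, c s) * ∏ s ∈ univ \ A, (τ (i s) - M)))
        = (∏ s ∈ A, c s) * ∑ i : Fin p → G, kacW ψ p i * ∏ s ∈ univ \ A, (τ (i s) - M) := by
      rw [Finset.mul_sum]
      exact Finset.sum_congr rfl fun i _ => by ring
    rw [h1, kacW_subset ψ τ M hW0 p (univ \ A), hcard]
  -- Step 4: restrict to subsets of K
  set K : Finset (Fin p) := univ.filter (fun s => (s : ℕ) < k) with hKdef
  have hKcard : K.card = k := by
    rw [hKdef, Finset.card_filter]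
    rw [Fin.sum_univ_eq_sum_range (fun j => if j < k then 1 else 0) p]
    rw [← Finset.card_filter]
    have : (Finset.range p).filter (fun j => j < k) = Finset.range k := by
      ext j; simp only [Finset.mem_filter, Finset.mem_range]; omega
    rw [this, Finset.card_range]
  have step4 : (∑ A ∈ (univ : Finset (Fin p)).powerset,
          (∏ s ∈ A, c s) * kacWsum ψ τ M (p - A.card))
      = ∑ A ∈ K.powerset, M ^ A.card * kacWsum ψ τ M (p - A.card) := by
    rw [← Finset.sum_subset (Finset.powerset_mono.mpr (Finset.subset_univ K))]
    · refine Finset.sum_congr rfl fun A hA => ?_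
      rw [Finset.mem_powerset] at hA
      congr 1
      rw [show (∏ s ∈ A, c s) = ∏ s ∈ A, M from
        Finset.prod_congr rfl fun s hs => by
          rw [hc]; exact if_pos (by have := hA hs; rw [hKdef] at this; simpa using this)]
      rw [Finset.prod_const]
    · intro A _ hA
      rw [Finset.mem_powerset] at hA
      have : ∃ s ∈ A, ¬ (s : ℕ) < k := by
        by_contra h
        push_neg at h
        exact hA fun s hs => by rw [hKdef]; simp [h s hs]
      obtain ⟨s, hs, hsk⟩ := this
      rw [Finset.prod_eq_zero hs (by rw [hc]; exact if_neg hsk), zero_mul]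
  -- Step 5: group by cardinality
  have step5 : (∑ A ∈ K.powerset, M ^ A.card * kacWsum ψ τ M (p - A.card))
      = ∑ m ∈ Finset.range (k + 1), (k.choose m : ℝ) * (M ^ m * kacWsum ψ τ M (p - m)) := by
    have := Finset.sum_powerset_apply_card (fun m => M ^ m * kacWsum ψ τ M (p - m)) (x := K)
    rw [hKcard] at this
    rw [this]
    exact Finset.sum_congr rfl fun m _ => by rw [nsmul_eq_mul]
  -- Step 6: reindex m ↦ p - m
  have step6 : (∑ m ∈ Finset.range (k + 1), (k.choose m : ℝ) * (M ^ m * kacWsum ψ τ M (p - m)))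
      = ∑ r ∈ Finset.Icc (p - k) p, M ^ (p - r) * (k.choose (k + r - p) : ℝ) * kacWsum ψ τ M r := by
    refine Finset.sum_nbij' (fun m => p - m) (fun r => p - r) ?_ ?_ ?_ ?_ ?_
    · intro m hm; rw [Finset.mem_range] at hm; rw [Finset.mem_Icc]; omega
    · intro r hr; rw [Finset.mem_Icc] at hr; rw [Finset.mem_range]; omega
    · intro m hm; rw [Finset.mem_range] at hm; omega
    · intro r hr; rw [Finset.mem_Icc] at hr; omega
    · intro m hm
      rw [Finset.mem_range] at hm
      have h1 : p - (p - m) = m := by omega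
      have h2 : k + (p - m) - p = k - m := by omega
      rw [h1, h2, Nat.choose_symm (by omega : m ≤ k)]
      ring
  -- Step 7: split small r
  have hW1 : kacWsum ψ τ M 1 = 0 := kacWsum_one ψ τ M hW0 hM
  set T : ℕ → ℝ := fun r => M ^ (p - r) * (k.choose (k + r - p) : ℝ) * kacWsum ψ τ M r with hT
  have hsplit : (∑ r ∈ Finset.Icc (p - k) p, T r)
      = (∑ r ∈ (Finset.Icc (p - k) p).filter (fun r => ¬ 2 ≤ r), T r)
        + ∑ r ∈ Finset.Icc (max 2 (p - k)) p, T r := by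
    have h1 : Finset.Icc (max 2 (p - k)) p = (Finset.Icc (p - k) p).filter (fun r => 2 ≤ r) := by
      ext r; simp only [Finset.mem_Icc, Finset.mem_filter]; omega
    rw [h1, ← Finset.sum_filter_add_sum_filter_not (Finset.Icc (p - k) p) (fun r => ¬ 2 ≤ r)]
    simp only [not_not]
  have hlow : (∑ r ∈ (Finset.Icc (p - k) p).filter (fun r => ¬ 2 ≤ r), T r)
      = (if k = p then 1 else 0) * (M ^ p * (Fintype.card G : ℝ)) := by
    by_cases hkp : k = p
    · have hset : (Finset.Icc (p - k) p).filter (fun r => ¬ 2 ≤ r) = {0, 1} := by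
        ext r
        simp only [Finset.mem_filter, Finset.mem_Icc, Finset.mem_insert, Finset.mem_singleton]
        omega
      rw [hset, Finset.sum_pair (by omega : (0:ℕ) ≠ 1), if_pos hkp, one_mul]
      have e0 : k + 0 - p = 0 := by omega
      have e1 : p - 0 = p := by omega
      simp only [hT, e0, e1, Nat.choose_zero_right, hW1, kacWsum_zero, Nat.cast_one, mul_zero]
      ring
    · rw [if_neg hkp, zero_mul]
      refine Finset.sum_eq_zero fun r hr => ?_
      rw [Finset.mem_filter, Finset.mem_Icc] at hr
      have hr1 : r = 1 := by omega
      subst hr1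
      simp only [hT, hW1, mul_zero]
  -- Assemble
  rw [step3, step4, step5, step6, hsplit, hlow, mul_add]
  congr 1
  · rcases eq_or_ne k p with h | h
    · rw [if_pos h]
      field_simp
    · rw [if_neg h]
      ring
end

section
/- For even p and the Kac potential w⁽ᵖ⁾, if |τ_i| ≤ 1 for all i, then N⁻¹ ∑_{i₁,…,i_p} w⁽ᵖ⁾(i₁,…,i_p) τ_{i₁}⋯τ_{i_p} ≥ M^p, where M = N⁻¹ ∑_i τ_i. -/
open Finset

/-- For even `p > 0` and `|τ_i| ≤ 1`, with `N = |G|` and `M = N⁻¹ ∑_i τ_i`: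
`N⁻¹ ∑ w⁽ᵖ⁾(i₁,…,i_p) τ_{i₁}⋯τ_{i_p} ≥ M^p`. -/
theorem kacW_pow_lower_bound {G : Type} [AddCommGroup G] [Fintype G] (ψ : G → ℝ)
    (hψ : ∀ k, 0 ≤ ψ k) (hW : 0 < ∑ k, ψ k) (τ : G → ℝ) (hτ : ∀ i, |τ i| ≤ 1)
    (p : ℕ) (hp : 0 < p) (hpe : Even p) :
    ((Fintype.card G : ℝ)⁻¹ * ∑ i, τ i) ^ p
      ≤ (Fintype.card G : ℝ)⁻¹ * ∑ i : Fin p → G, kacW ψ p i * ∏ s, τ (i s) := by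
  classical
  set W := ∑ k, ψ k with hWdef
  set y : G → ℝ := fun k => (∑ j, ψ (j - k) * τ j) / W with hy
  have hN : (0 : ℝ) < Fintype.card G := by
    exact_mod_cast Fintype.card_pos
  -- Step 1: rewrite the big sum as ∑_k (y k)^p
  have h1 : ∀ k : G, (∑ j, ψ (j - k) * τ j) ^ p
      = ∑ i : Fin p → G, ∏ a, (ψ (i a - k) * τ (i a)) := by
    intro k
    calc (∑ j, ψ (j - k) * τ j) ^ p
        = ∏ _a : Fin p, ∑ j, ψ (j - k) * τ j := by
          rw [Finset.prod_const, Finset.card_univ, Fintype.card_fin]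
      _ = ∑ i ∈ Fintype.piFinset (fun _ : Fin p => (Finset.univ : Finset G)),
            ∏ a, ψ (i a - k) * τ (i a) := Finset.prod_univ_sum _ _
      _ = ∑ i : Fin p → G, ∏ a, ψ (i a - k) * τ (i a) := by
          rw [Fintype.piFinset_univ]
  have key : ∑ i : Fin p → G, kacW ψ p i * ∏ s, τ (i s) = ∑ k, y k ^ p := by
    calc ∑ i : Fin p → G, kacW ψ p i * ∏ s, τ (i s)
        = ∑ i : Fin p → G, ∑ k, (∏ a, (ψ (i a - k) * τ (i a))) / W ^ p := by
          refine Finset.sum_congr rfl fun i _ => ?_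
          simp only [kacW, div_mul_eq_mul_div, Finset.sum_mul, Finset.sum_div, ← hWdef]
          refine Finset.sum_congr rfl fun k _ => ?_
          rw [Finset.prod_mul_distrib]
      _ = ∑ k, ∑ i : Fin p → G, (∏ a, (ψ (i a - k) * τ (i a))) / W ^ p :=
          Finset.sum_comm
      _ = ∑ k, y k ^ p := by
          refine Finset.sum_congr rfl fun k _ => ?_
          rw [hy, div_pow, h1 k, ← Finset.sum_div]
  -- Step 2: ∑_k y k = ∑_i τ i
  have hψsum : ∀ j : G, ∑ k, ψ (j - k) = W := by
    intro j
    exact Fintype.sum_equiv (Equiv.subLeft j) _ _ (fun k => rfl)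
  have hsum_y : ∑ k, y k = ∑ i, τ i := by
    simp only [hy, ← Finset.sum_div]
    rw [Finset.sum_comm]
    have : ∑ j : G, ∑ k : G, ψ (j - k) * τ j = (∑ j, τ j) * W := by
      rw [Finset.sum_mul]
      refine Finset.sum_congr rfl fun j _ => ?_
      rw [← Finset.sum_mul, hψsum j, mul_comm]
    rw [this, mul_div_assoc, div_self hW.ne', mul_one]
  -- Step 3: Jensen
  have jensen := (hpe.convexOn_pow (𝕜 := ℝ)).map_sum_le
    (t := (Finset.univ : Finset G)) (w := fun _ => (Fintype.card G : ℝ)⁻¹) (p := y)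
    (fun _ _ => by positivity)
    (by rw [Finset.sum_const, Finset.card_univ, nsmul_eq_mul, mul_inv_cancel₀ hN.ne'])
    (fun _ _ => Set.mem_univ _)
  simp only [smul_eq_mul] at jensen
  calc ((Fintype.card G : ℝ)⁻¹ * ∑ i, τ i) ^ p
      = (∑ k, (Fintype.card G : ℝ)⁻¹ * y k) ^ p := by
        rw [← Finset.mul_sum, hsum_y]
    _ ≤ ∑ k, (Fintype.card G : ℝ)⁻¹ * y k ^ p := jensen
    _ = (Fintype.card G : ℝ)⁻¹ * ∑ i : Fin p → G, kacW ψ p i * ∏ s, τ (i s) := by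
        rw [← Finset.mul_sum, key]
end

section
/- Suppose real numbers (ε_s)_{s≥2} satisfy ∑_{s≥3} ε_s² ∑_{r=2}^{s} 2^r C(s,r) ≤ ε₂². Then for any reals q, y with |q| ≤ 1, |y| ≤ 2, and any even p ≥ 2: ∑_{r=2}^{p} C(p,r) q^{p−r} y^r + ε₂² y² + ∑_{s≥3} ε_s² ∑_{r=2}^{s} C(s,r) q^{s−r} y^r ≥ ∑_{r=2}^{p} C(p,r) q^{p−r} y^r + (3/4) ε₂² y² ≥ 0. -/
open Finset


lemma bern_even (p : ℕ) (hpe : Even p) (x : ℝ) : 1 + p * x ≤ (1 + x) ^ p := by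
  rcases le_or_gt (-2) x with h | h
  · exact one_add_mul_le_pow h p
  · have hb : (-2 : ℝ) ≤ -2 - x := by linarith
    have h1 : 1 + (p : ℝ) * (-2 - x) ≤ (1 + (-2 - x)) ^ p := one_add_mul_le_pow hb p
    have h2 : (1 + (-2 - x)) ^ p = (1 + x) ^ p := by
      rw [show (1 + (-2 - x)) = -(1 + x) by ring, hpe.neg_pow]
    have hx : x ≤ -2 - x := by linarith
    have : (p : ℝ) * x ≤ (p : ℝ) * (-2 - x) :=
      mul_le_mul_of_nonneg_left hx (Nat.cast_nonneg p)
    linarith [h2 ▸ h1]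

lemma tangent_even (p : ℕ) (hpe : Even p) (hp : 2 ≤ p) (q y : ℝ) :
    q ^ p + p * q ^ (p - 1) * y ≤ (q + y) ^ p := by
  rcases eq_or_ne q 0 with rfl | hq0
  · have h1 : (0 : ℝ) ^ p = 0 := zero_pow (by omega)
    have h2 : (0 : ℝ) ^ (p - 1) = 0 := zero_pow (by omega)
    simp [h1, h2, hpe.pow_nonneg y]
  · have hqp : (0 : ℝ) < q ^ p := hpe.pow_pos hq0
    have key := bern_even p hpe (y / q)
    have h1 : q ^ p * (1 + p * (y / q)) ≤ q ^ p * (1 + y / q) ^ p :=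
      mul_le_mul_of_nonneg_left key hqp.le
    have h2 : q ^ p * (1 + y / q) ^ p = (q + y) ^ p := by
      rw [← mul_pow]; congr 1; field_simp
    have h3 : q ^ p * (1 + p * (y / q)) = q ^ p + p * q ^ (p - 1) * y := by
      have : q ^ p = q ^ (p - 1) * q := by
        rw [← pow_succ]; congr 1; omega
      have hyq : q * (y / q) = y := by field_simp
      rw [this, mul_add, mul_one, show q ^ (p - 1) * q * (↑p * (y / q)) = ↑p * q ^ (p - 1) * (q * (y / q)) by ring, hyq]
    linarith [h2 ▸ h3 ▸ h1]

lemma main_sum_nonneg (p : ℕ) (hpe : Even p) (hp : 2 ≤ p) (q y : ℝ) :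
    0 ≤ ∑ r ∈ Finset.Icc 2 p, (p.choose r : ℝ) * q ^ (p - r) * y ^ r := by
  have hpow : (q + y) ^ p = ∑ k ∈ Finset.range (p + 1), y ^ k * q ^ (p - k) * (p.choose k : ℝ) := by
    rw [add_comm q y, add_pow]
  have hsplit : ∑ k ∈ Finset.Ico 0 2, y ^ k * q ^ (p - k) * (p.choose k : ℝ)
      + ∑ k ∈ Finset.Ico 2 (p + 1), y ^ k * q ^ (p - k) * (p.choose k : ℝ)
      = ∑ k ∈ Finset.Ico 0 (p + 1), y ^ k * q ^ (p - k) * (p.choose k : ℝ) :=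
    Finset.sum_Ico_consecutive _ (by omega) (by omega)
  have h0 : ∑ k ∈ Finset.Ico 0 2, y ^ k * q ^ (p - k) * (p.choose k : ℝ)
      = q ^ p + p * q ^ (p - 1) * y := by
    rw [show Finset.Ico 0 2 = {0, 1} by rfl]
    simp [Nat.choose_one_right]; ring
  have heq : ∑ r ∈ Finset.Icc 2 p, (p.choose r : ℝ) * q ^ (p - r) * y ^ r
      = (q + y) ^ p - (q ^ p + p * q ^ (p - 1) * y) := by
    rw [hpow, Finset.range_eq_Ico, ← hsplit, h0,
      show Finset.Icc 2 p = Finset.Ico 2 (p+1) from (Finset.Ico_add_one_right_eq_Icc 2 p).symm,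
      Finset.sum_congr rfl (fun k _ => show (p.choose k : ℝ) * q ^ (p - k) * y ^ k
        = y ^ k * q ^ (p - k) * (p.choose k : ℝ) by ring)]
    ring
  rw [heq]
  linarith [tangent_even p hpe hp q y]

lemma inner_bound (q y : ℝ) (hq : |q| ≤ 1) (hy : |y| ≤ 2) (s : ℕ) :
    -(y ^ 2 / 4 * ∑ r ∈ Finset.Icc 2 s, (2 : ℝ) ^ r * (s.choose r : ℝ)) ≤
      ∑ r ∈ Finset.Icc 2 s, (s.choose r : ℝ) * q ^ (s - r) * y ^ r := by
  have habs : |∑ r ∈ Finset.Icc 2 s, (s.choose r : ℝ) * q ^ (s - r) * y ^ r|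
      ≤ y ^ 2 / 4 * ∑ r ∈ Finset.Icc 2 s, (2 : ℝ) ^ r * (s.choose r : ℝ) := by
    calc |∑ r ∈ Finset.Icc 2 s, (s.choose r : ℝ) * q ^ (s - r) * y ^ r|
        ≤ ∑ r ∈ Finset.Icc 2 s, |(s.choose r : ℝ) * q ^ (s - r) * y ^ r| :=
          Finset.abs_sum_le_sum_abs _ _
      _ ≤ ∑ r ∈ Finset.Icc 2 s, y ^ 2 / 4 * ((2 : ℝ) ^ r * (s.choose r : ℝ)) := by
          apply Finset.sum_le_sum
          intro r hr
          have hr2 : 2 ≤ r := (Finset.mem_Icc.mp hr).1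
          have h1 : |(s.choose r : ℝ) * q ^ (s - r) * y ^ r|
              = (s.choose r : ℝ) * |q| ^ (s - r) * |y| ^ r := by
            rw [abs_mul, abs_mul, abs_pow, abs_pow, Nat.abs_cast]
          have hq1 : |q| ^ (s - r) ≤ 1 := pow_le_one₀ (abs_nonneg q) hq
          have hy1 : |y| ^ r ≤ 2 ^ (r - 2) * y ^ 2 := by
            have he : |y| ^ r = |y| ^ (r - 2) * |y| ^ 2 := by
              rw [← pow_add]; congr 1; omega
            have h2 : |y| ^ (r - 2) ≤ 2 ^ (r - 2) :=
              pow_le_pow_left₀ (abs_nonneg y) hy _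
            rw [he, sq_abs]
            exact mul_le_mul_of_nonneg_right h2 (sq_nonneg y)
          have hC : (0 : ℝ) ≤ (s.choose r : ℝ) := Nat.cast_nonneg _
          have h3 : (s.choose r : ℝ) * |q| ^ (s - r) * |y| ^ r
              ≤ (s.choose r : ℝ) * 1 * (2 ^ (r - 2) * y ^ 2) :=
            mul_le_mul (mul_le_mul_of_nonneg_left hq1 hC) hy1
              (pow_nonneg (abs_nonneg y) r) (by linarith)
          have h4 : (s.choose r : ℝ) * 1 * (2 ^ (r - 2) * y ^ 2)
              = y ^ 2 / 4 * ((2 : ℝ) ^ r * (s.choose r : ℝ)) := by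
            have : (2 : ℝ) ^ r = 2 ^ (r - 2) * 4 := by
              rw [show r = (r - 2) + 2 by omega, pow_add]; norm_num
            rw [this]; ring
          rw [h1]; linarith
      _ = y ^ 2 / 4 * ∑ r ∈ Finset.Icc 2 s, (2 : ℝ) ^ r * (s.choose r : ℝ) := by
          rw [Finset.mul_sum]
  linarith [neg_abs_le (∑ r ∈ Finset.Icc 2 s, (s.choose r : ℝ) * q ^ (s - r) * y ^ r)]

/-- If the perturbation parameters satisfy `∑_{s≥3} ε_s² ∑_{r=2}^s 2^r C(s,r) ≤ ε₂²`, then for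
`|q| ≤ 1`, `|y| ≤ 2` and even `p ≥ 2`:
`∑_{r=2}^p C(p,r) q^{p−r} y^r + ε₂² y² + ∑_{s≥3} ε_s² ∑_{r=2}^s C(s,r) q^{s−r} y^r
   ≥ ∑_{r=2}^p C(p,r) q^{p−r} y^r + (3/4) ε₂² y² ≥ 0`. -/
theorem perturbed_interpolation_derivative_sign (ε : ℕ → ℝ) (q y : ℝ)
    (hq : |q| ≤ 1) (hy : |y| ≤ 2) (p : ℕ) (hpe : Even p) (hp : 2 ≤ p)
    (hsum1 : Summable (fun s : ℕ =>
      if 3 ≤ s then ε s ^ 2 * ∑ r ∈ Finset.Icc 2 s, (2 : ℝ) ^ r * (s.choose r : ℝ) else 0))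
    (hsum2 : Summable (fun s : ℕ =>
      if 3 ≤ s then ε s ^ 2 * ∑ r ∈ Finset.Icc 2 s, (s.choose r : ℝ) * q ^ (s - r) * y ^ r
      else 0))
    (hε : (∑' s : ℕ,
        if 3 ≤ s then ε s ^ 2 * ∑ r ∈ Finset.Icc 2 s, (2 : ℝ) ^ r * (s.choose r : ℝ) else 0)
      ≤ ε 2 ^ 2) :
    (∑ r ∈ Finset.Icc 2 p, (p.choose r : ℝ) * q ^ (p - r) * y ^ r) + ε 2 ^ 2 * y ^ 2 +
        (∑' s : ℕ,
          if 3 ≤ s then ε s ^ 2 * ∑ r ∈ Finset.Icc 2 s, (s.choose r : ℝ) * q ^ (s - r) * y ^ r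
          else 0)
      ≥ (∑ r ∈ Finset.Icc 2 p, (p.choose r : ℝ) * q ^ (p - r) * y ^ r) +
          (3 / 4) * ε 2 ^ 2 * y ^ 2 ∧
    (∑ r ∈ Finset.Icc 2 p, (p.choose r : ℝ) * q ^ (p - r) * y ^ r) +
        (3 / 4) * ε 2 ^ 2 * y ^ 2 ≥ 0 := by
  constructor
  · -- reduce to `T ≥ -(y²/4) ε₂²`
    have key : ∀ s : ℕ,
        -(y ^ 2 / 4) * (if 3 ≤ s then
            ε s ^ 2 * ∑ r ∈ Finset.Icc 2 s, (2 : ℝ) ^ r * (s.choose r : ℝ) else 0)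
        ≤ (if 3 ≤ s then
            ε s ^ 2 * ∑ r ∈ Finset.Icc 2 s, (s.choose r : ℝ) * q ^ (s - r) * y ^ r else 0) := by
      intro s
      by_cases h : 3 ≤ s
      · simp only [if_pos h]
        calc -(y ^ 2 / 4) * (ε s ^ 2 * ∑ r ∈ Finset.Icc 2 s, (2 : ℝ) ^ r * (s.choose r : ℝ))
            = ε s ^ 2 * (-(y ^ 2 / 4 * ∑ r ∈ Finset.Icc 2 s, (2 : ℝ) ^ r * (s.choose r : ℝ))) := by
              ring
          _ ≤ ε s ^ 2 * ∑ r ∈ Finset.Icc 2 s, (s.choose r : ℝ) * q ^ (s - r) * y ^ r :=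
              mul_le_mul_of_nonneg_left (inner_bound q y hq hy s) (sq_nonneg _)
      · simp [h]
    have hsl : Summable (fun s : ℕ => -(y ^ 2 / 4) * (if 3 ≤ s then
        ε s ^ 2 * ∑ r ∈ Finset.Icc 2 s, (2 : ℝ) ^ r * (s.choose r : ℝ) else 0)) :=
      hsum1.mul_left _
    have hT := Summable.tsum_le_tsum key hsl hsum2
    rw [tsum_mul_left] at hT
    have hTlow : -(y ^ 2 / 4) * ε 2 ^ 2 ≤ -(y ^ 2 / 4) * (∑' s : ℕ,
        if 3 ≤ s then ε s ^ 2 * ∑ r ∈ Finset.Icc 2 s, (2 : ℝ) ^ r * (s.choose r : ℝ) else 0) := by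
      nlinarith [sq_nonneg y]
    have : -(y ^ 2 / 4) * ε 2 ^ 2 ≤ (∑' s : ℕ,
        if 3 ≤ s then ε s ^ 2 * ∑ r ∈ Finset.Icc 2 s, (s.choose r : ℝ) * q ^ (s - r) * y ^ r
        else 0) := le_trans hTlow hT
    linarith
  · have h1 := main_sum_nonneg p hpe hp q y
    have h2 : (0 : ℝ) ≤ (3 / 4) * ε 2 ^ 2 * y ^ 2 := by positivity
    linarith
end
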